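/- Every line of L₄ is secant to the hyperbolic quadric Q_λ for every nonzero square λ ∈ GF(q) and external to the elliptic quadric Q_λ for every nonsquare λ ∈ GF(q). -/

import Mathlib

/-!
Common setting: `PG(3,q)` as the lattice of subspaces of `V = GF(q)⁴`;
the pencil of quadrics `Q_λ : x₁x₃ - x₂² + λx₄² = 0`, the plane `π : x₄ = 0`,
the conic `C = Q_λ ∩ π`, and the group `G ≤ PGL(4,q)` induced by the matrices
`M(a,b,c,d)`.
-/

/-- The quadratic form `F_λ(x) = x₁x₃ - x₂² + λx₄²` on `V = F⁴`. -/
def Fq (F : Type) [Field F] (lam : F) (v : Fin 4 → F) : F :=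
  v 0 * v 2 - v 1 ^ 2 + lam * v 3 ^ 2

/-- The matrix `M(a,b,c,d)`. -/
def Mmat (F : Type) [Field F] (a b c d : F) : Matrix (Fin 4) (Fin 4) F :=
  !![a^2, 2*a*c, c^2, 0;
     a*b, a*d + b*c, c*d, 0;
     b^2, 2*b*d, d^2, 0;
     0,   0,       0,   a*d - b*c]

/-- A point of `PG(3,q)`: a 1-dimensional subspace of `F⁴`. -/
def isPoint (F : Type) [Field F] (P : Submodule F (Fin 4 → F)) : Prop :=
  Module.finrank F P = 1

/-- A line of `PG(3,q)`: a 2-dimensional subspace of `F⁴`. -/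
def isLine (F : Type) [Field F] (l : Submodule F (Fin 4 → F)) : Prop :=
  Module.finrank F l = 2

/-- A plane of `PG(3,q)`: a 3-dimensional subspace of `F⁴`. -/
def isPlane (F : Type) [Field F] (s : Submodule F (Fin 4 → F)) : Prop :=
  Module.finrank F s = 3

/-- The quadric `Q_λ`, as the set of points on which `F_λ` vanishes. -/
def quadric (F : Type) [Field F] (lam : F) : Set (Submodule F (Fin 4 → F)) :=
  {P | isPoint F P ∧ ∀ v ∈ P, Fq F lam v = 0}

/-- The plane `π : x₄ = 0`. -/
def planePi (F : Type) [Field F] : Submodule F (Fin 4 → F) where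
  carrier := {v | v 3 = 0}
  add_mem' := by
    intro a b ha hb
    simp only [Set.mem_setOf_eq, Pi.add_apply] at *
    rw [ha, hb, add_zero]
  zero_mem' := by simp
  smul_mem' := by
    intro c a ha
    simp only [Set.mem_setOf_eq, Pi.smul_apply, smul_eq_mul] at *
    rw [ha, mul_zero]

/-- The point `U₄ = ⟨(0,0,0,1)⟩`. -/
def pointU4 (F : Type) [Field F] : Submodule F (Fin 4 → F) :=
  Submodule.span F {(Pi.single 3 1 : Fin 4 → F)}

/-- The conic `C = Q_λ ∩ π` (independent of `λ`). -/
def conicC (F : Type) [Field F] : Set (Submodule F (Fin 4 → F)) :=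
  {P | P ∈ quadric F 0 ∧ P ≤ planePi F}

/-- The set of points of the quadric `Q_λ` lying on a subspace `l`. -/
def qpts (F : Type) [Field F] (lam : F) (l : Submodule F (Fin 4 → F)) :
    Set (Submodule F (Fin 4 → F)) :=
  {P | P ∈ quadric F lam ∧ P ≤ l}

/-- A line is tangent to `Q_λ` if it contains exactly one of its points. -/
def tangentTo (F : Type) [Field F] (l : Submodule F (Fin 4 → F)) (lam : F) : Prop :=
  (qpts F lam l).ncard = 1

/-- A line is secant to `Q_λ` if it contains exactly two of its points. -/
def secantTo (F : Type) [Field F] (l : Submodule F (Fin 4 → F)) (lam : F) : Prop :=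
  (qpts F lam l).ncard = 2

/-- A line is external to `Q_λ` if it contains none of its points. -/
def externalTo (F : Type) [Field F] (l : Submodule F (Fin 4 → F)) (lam : F) : Prop :=
  (qpts F lam l).ncard = 0

/-- `L₁`: lines of `π` tangent to `C`. -/
def lineL1 (F : Type) [Field F] : Set (Submodule F (Fin 4 → F)) :=
  {l | isLine F l ∧ l ≤ planePi F ∧ ({P | P ∈ conicC F ∧ P ≤ l}).ncard = 1}

/-- `L₂`: lines of `π` external to `C`. -/
def lineL2 (F : Type) [Field F] : Set (Submodule F (Fin 4 → F)) :=
  {l | isLine F l ∧ l ≤ planePi F ∧ ({P | P ∈ conicC F ∧ P ≤ l}).ncard = 0}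

/-- `L₃`: lines of `π` secant to `C`. -/
def lineL3 (F : Type) [Field F] : Set (Submodule F (Fin 4 → F)) :=
  {l | isLine F l ∧ l ≤ planePi F ∧ ({P | P ∈ conicC F ∧ P ≤ l}).ncard = 2}

/-- `E`: the external points of `C` in `π` (on exactly two tangent lines of `C`). -/
def setE (F : Type) [Field F] : Set (Submodule F (Fin 4 → F)) :=
  {P | isPoint F P ∧ P ≤ planePi F ∧ P ∉ conicC F ∧
    ({m | m ∈ lineL1 F ∧ P ≤ m}).ncard = 2}

/-- `I`: the internal points of `C` in `π` (on no tangent line of `C`). -/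
def setI (F : Type) [Field F] : Set (Submodule F (Fin 4 → F)) :=
  {P | isPoint F P ∧ P ≤ planePi F ∧ P ∉ conicC F ∧
    ({m | m ∈ lineL1 F ∧ P ≤ m}).ncard = 0}

/-- `L₁'`: the lines through `U₄` contained in the cone `Q₀`. -/
def lineL1' (F : Type) [Field F] : Set (Submodule F (Fin 4 → F)) :=
  {l | isLine F l ∧ pointU4 F ≤ l ∧ ∀ v ∈ l, Fq F 0 v = 0}

/-- `L₂'`: the lines through `U₄` meeting `π` in a point of `I`. -/
def lineL2' (F : Type) [Field F] : Set (Submodule F (Fin 4 → F)) :=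
  {l | isLine F l ∧ pointU4 F ≤ l ∧ (l ⊓ planePi F) ∈ setI F}

/-- `L₃'`: the lines through `U₄` meeting `π` in a point of `E`. -/
def lineL3' (F : Type) [Field F] : Set (Submodule F (Fin 4 → F)) :=
  {l | isLine F l ∧ pointU4 F ≤ l ∧ (l ⊓ planePi F) ∈ setE F}

/-- `L₄`: the lines not through `U₄`, tangent to the cone `Q₀`, meeting `π` in a
point of `E`. -/
def lineL4 (F : Type) [Field F] : Set (Submodule F (Fin 4 → F)) :=
  {l | isLine F l ∧ ¬ pointU4 F ≤ l ∧ tangentTo F l 0 ∧ (l ⊓ planePi F) ∈ setE F}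

/-- `L₄'`: the lines meeting `π` in exactly one point, lying on `C`, and secant to
every quadric `Q_λ`. -/
def lineL4' (F : Type) [Field F] : Set (Submodule F (Fin 4 → F)) :=
  {l | isLine F l ∧ (l ⊓ planePi F) ∈ conicC F ∧ ∀ lam : F, secantTo F l lam}

/-- The collineations of `PG(3,q)` induced by the matrices `M(a,b,c,d)`,
`ad - bc ≠ 0`, acting on subspaces. -/
def Gcoll (F : Type) [Field F] : Set (Equiv.Perm (Submodule F (Fin 4 → F))) :=
  {σ | ∃ a b c d : F, a * d - b * c ≠ 0 ∧
    ∃ e : (Fin 4 → F) ≃ₗ[F] (Fin 4 → F),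
      (∀ v, e v = (Mmat F a b c d).mulVec v) ∧
      ∀ W : Submodule F (Fin 4 → F), σ W = W.map e.toLinearMap}

/-- The group `G ≃ PGL(2,q)`, as a group of collineations of `PG(3,q)`. -/
def G (F : Type) [Field F] : Subgroup (Equiv.Perm (Submodule F (Fin 4 → F))) :=
  Subgroup.closure (Gcoll F)

/-- `A = L₁' ∪ L₂' ∪ L₃ ∪ L₄'`. -/
def setA (F : Type) [Field F] : Set (Submodule F (Fin 4 → F)) :=
  lineL1' F ∪ lineL2' F ∪ lineL3 F ∪ lineL4' F

/-- `B = L₁ ∪ L₂ ∪ L₃' ∪ L₄`. -/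
def setB (F : Type) [Field F] : Set (Submodule F (Fin 4 → F)) :=
  lineL1 F ∪ lineL2 F ∪ lineL3' F ∪ lineL4 F

/-- `S_ℓ`: the lines of `S` meeting the line `ℓ` (in at least a point). -/
def linesMeeting (F : Type) [Field F] (S : Set (Submodule F (Fin 4 → F)))
    (l : Submodule F (Fin 4 → F)) : Set (Submodule F (Fin 4 → F)) :=
  {r | r ∈ S ∧ r ⊓ l ≠ ⊥}

/-- A spread of `PG(3,q)`: `q² + 1` pairwise disjoint lines. -/
def isSpread (F : Type) [Field F] (q : ℕ) (S : Set (Submodule F (Fin 4 → F))) : Prop :=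
  (∀ l ∈ S, isLine F l) ∧ S.ncard = q ^ 2 + 1 ∧
    ∀ l ∈ S, ∀ l' ∈ S, l ≠ l' → l ⊓ l' = ⊥

/-- A Cameron–Liebler line class with parameter `x`: a set of lines meeting every
spread in exactly `x` lines. -/
def isCameronLiebler (F : Type) [Field F] (q x : ℕ)
    (L : Set (Submodule F (Fin 4 → F))) : Prop :=
  (∀ l ∈ L, isLine F l) ∧ ∀ S, isSpread F q S → (L ∩ S).ncard = x

/-- `O_n`: the points off `Q_λ` at which `F_λ` evaluates to a nonsquare. -/
def setOn (F : Type) [Field F] (lam : F) : Set (Submodule F (Fin 4 → F)) :=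
  {P | isPoint F P ∧ ∀ v ∈ P, v ≠ 0 → ¬ IsSquare (Fq F lam v)}

/-- `O_s`: the points off `Q_λ` at which `F_λ` evaluates to a nonzero square. -/
def setOs (F : Type) [Field F] (lam : F) : Set (Submodule F (Fin 4 → F)) :=
  {P | isPoint F P ∧ ∀ v ∈ P, v ≠ 0 → Fq F lam v ≠ 0 ∧ IsSquare (Fq F lam v)}

/-- `T`: the tangent lines to `Q_λ` all of whose points off `Q_λ` lie in `O_n`. -/
def setT (F : Type) [Field F] (lam : F) : Set (Submodule F (Fin 4 → F)) :=
  {l | isLine F l ∧ tangentTo F l lam ∧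
    ∀ P, isPoint F P → P ≤ l → P ∉ quadric F lam → P ∈ setOn F lam}

/-- `S`: the secant lines to `Q_λ`. -/
def setS (F : Type) [Field F] (lam : F) : Set (Submodule F (Fin 4 → F)) :=
  {l | isLine F l ∧ secantTo F l lam}

/-- The symmetric bilinear form obtained by polarizing `F_λ`. -/
def polarFq (F : Type) [Field F] (lam : F) (u v : Fin 4 → F) : F :=
  Fq F lam (u + v) - Fq F lam u - Fq F lam v

theorem polarFq_eq (F : Type) [Field F] (lam : F) (u v : Fin 4 → F) :
    polarFq F lam u v =
      u 0 * v 2 + u 2 * v 0 - 2 * (u 1 * v 1) + lam * (2 * (u 3 * v 3)) := by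
  simp only [polarFq, Fq, Pi.add_apply]
  ring

/-- `W^{⊥_λ}`: the orthogonal complement of a subspace `W` with respect to the
symmetric bilinear form obtained by polarizing `F_λ`. -/
def perpLam (F : Type) [Field F] (lam : F) (W : Submodule F (Fin 4 → F)) :
    Submodule F (Fin 4 → F) where
  carrier := {v | ∀ u ∈ W, polarFq F lam u v = 0}
  add_mem' := by
    intro x y hx hy u hu
    have h1 := hx u hu
    have h2 := hy u hu
    rw [polarFq_eq] at h1 h2 ⊢
    simp only [Pi.add_apply]
    linear_combination h1 + h2
  zero_mem' := by
    intro u hu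
    rw [polarFq_eq]
    simp
  smul_mem' := by
    intro c x hx u hu
    have h1 := hx u hu
    rw [polarFq_eq] at h1 ⊢
    simp only [Pi.smul_apply, smul_eq_mul]
    linear_combination c * h1

/-!
The line `ℓ` meets `π` in an external point `⟨u⟩` of `C`. A tangent to `C` through `⟨u⟩`
touches `C` at a point conjugate to `u`, which forces `-F₀(u)` to be a nonzero square. If `ℓ`
touches the cone `Q₀` at `⟨w⟩`, then `w` and `u` are conjugate too, so after rescaling `u` to
`F₀(u) = -w₄²` every point of `ℓ` off `π` is `⟨w + xu⟩` with `F_λ(w + xu) = w₄²(λ - x²)`.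
Hence the points of `Q_λ` on `ℓ` correspond to the square roots of `λ`, and there are
`χ(λ) + 1` of them, `χ` the quadratic character of `GF(q)`.
-/

section Pencil

variable {F : Type} [Field F]

lemma Fq_smul (lam a : F) (v : Fin 4 → F) : Fq F lam (a • v) = a ^ 2 * Fq F lam v := by
  simp only [Fq, Pi.smul_apply, smul_eq_mul]; ring

lemma Fq_eq_Fq_zero_add (lam : F) (v : Fin 4 → F) : Fq F lam v = Fq F 0 v + lam * v 3 ^ 2 := by
  simp only [Fq]; ring

lemma polarFq_smul_right (lam t : F) (u v : Fin 4 → F) :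
    polarFq F lam u (t • v) = t * polarFq F lam u v := by
  simp only [polarFq_eq, Pi.smul_apply, smul_eq_mul]; ring

lemma Fq_add_smul (lam t : F) (c u : Fin 4 → F) :
    Fq F lam (c + t • u) = Fq F lam c + t * polarFq F lam c u + t ^ 2 * Fq F lam u := by
  have h := polarFq_smul_right lam t c u
  rw [polarFq, Fq_smul] at h
  linear_combination h

lemma mem_planePi {v : Fin 4 → F} : v ∈ planePi F ↔ v 3 = 0 := Iff.rfl

lemma Fq_of_mem_planePi (lam : F) {v : Fin 4 → F} (hv : v ∈ planePi F) :
    Fq F lam v = Fq F 0 v := by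
  rw [Fq_eq_Fq_zero_add, mem_planePi.mp hv]; ring

lemma polarFq_of_mem_planePi (lam : F) (u : Fin 4 → F) {v : Fin 4 → F} (hv : v ∈ planePi F) :
    polarFq F lam u v = polarFq F 0 u v := by
  rw [polarFq_eq, polarFq_eq, mem_planePi.mp hv]; ring

end Pencil

section Points

variable {F : Type} [Field F] {lam : F} {l : Submodule F (Fin 4 → F)}

lemma exists_eq_span_singleton_of_isPoint {P : Submodule F (Fin 4 → F)} (hP : isPoint F P) :
    ∃ v, v ≠ 0 ∧ P = Submodule.span F {v} := by
  obtain ⟨v, rfl⟩ := ((Submodule.finrank_le_one_iff_isPrincipal P).mp hP.le).principal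
  refine ⟨v, ?_, rfl⟩
  rintro rfl
  rw [isPoint, Submodule.span_zero_singleton, finrank_bot] at hP
  exact zero_ne_one hP

lemma span_singleton_mem_quadric_iff {v : Fin 4 → F} (hv : v ≠ 0) :
    Submodule.span F {v} ∈ quadric F lam ↔ Fq F lam v = 0 := by
  refine ⟨fun h ↦ h.2 v (Submodule.mem_span_singleton_self v),
    fun h ↦ ⟨finrank_span_singleton hv, ?_⟩⟩
  intro x hx
  obtain ⟨a, rfl⟩ := Submodule.mem_span_singleton.mp hx
  rw [Fq_smul, h, mul_zero]

lemma span_singleton_mem_qpts {v : Fin 4 → F} (hv : v ≠ 0) (hvl : v ∈ l)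
    (hvQ : Fq F lam v = 0) :
    Submodule.span F {v} ∈ qpts F lam l :=
  ⟨(span_singleton_mem_quadric_iff hv).mpr hvQ, (Submodule.span_singleton_le_iff_mem v l).mpr hvl⟩

lemma exists_mem_of_mem_qpts {P : Submodule F (Fin 4 → F)} (hP : P ∈ qpts F lam l) :
    ∃ v, v ≠ 0 ∧ v ∈ l ∧ Fq F lam v = 0 ∧ P = Submodule.span F {v} := by
  obtain ⟨⟨hPpt, hPQ⟩, hPl⟩ := hP
  obtain ⟨v, hv0, rfl⟩ := exists_eq_span_singleton_of_isPoint hPpt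
  exact ⟨v, hv0, hPl (Submodule.mem_span_singleton_self v),
    hPQ v (Submodule.mem_span_singleton_self v), rfl⟩

/-- A line through a point `⟨c⟩` of `Q_λ` and a point `⟨u⟩` off it meets `Q_λ` again in
`⟨c + t u⟩`, `t = -polar(c,u)/F_λ(u)`, unless `c` and `u` are conjugate. -/
lemma polarFq_eq_zero_of_tangentTo (htan : tangentTo F l lam) {c u : Fin 4 → F}
    (hc : c ∈ l) (hc0 : c ≠ 0) (hcQ : Fq F lam c = 0) (hu : u ∈ l) (huQ : Fq F lam u ≠ 0) :
    polarFq F lam c u = 0 := by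
  by_contra hpol
  set t := -polarFq F lam c u / Fq F lam u
  have ht : t ≠ 0 := div_ne_zero (neg_ne_zero.mpr hpol) huQ
  have hQ : Fq F lam (c + t • u) = 0 := by
    have htQ : t * Fq F lam u = -polarFq F lam c u := div_mul_cancel₀ _ huQ
    rw [Fq_add_smul, hcQ]
    linear_combination t * htQ
  have hnot : c + t • u ∉ Submodule.span F {c} := by
    intro h
    obtain ⟨a, ha⟩ := Submodule.mem_span_singleton.mp h
    have htu : t • u = (a - 1) • c := by rw [sub_smul, one_smul, ha, add_sub_cancel_left]
    have h' := congrArg (Fq F lam) htu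
    rw [Fq_smul, Fq_smul, hcQ, mul_zero] at h'
    exact ht (pow_eq_zero_iff two_ne_zero |>.mp ((mul_eq_zero.mp h').resolve_right huQ))
  have hv0 : c + t • u ≠ 0 := fun h ↦ hnot (h ▸ Submodule.zero_mem _)
  obtain ⟨P, hP⟩ := Set.ncard_eq_one.mp htan
  have h₁ := span_singleton_mem_qpts hc0 hc hcQ
  have h₂ := span_singleton_mem_qpts hv0 (l.add_mem hc (l.smul_mem t hu)) hQ
  rw [hP, Set.mem_singleton_iff] at h₁ h₂
  exact hnot (h₁ ▸ h₂ ▸ Submodule.mem_span_singleton_self _)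

lemma exists_mem_of_tangentTo (htan : tangentTo F l lam) :
    ∃ v, v ≠ 0 ∧ v ∈ l ∧ Fq F lam v = 0 := by
  obtain ⟨P, hP⟩ := Set.ncard_eq_one.mp htan
  obtain ⟨v, hv0, hvl, hvQ, -⟩ := exists_mem_of_mem_qpts (hP ▸ Set.mem_singleton P)
  exact ⟨v, hv0, hvl, hvQ⟩

end Points

section LineThroughPlanePoint

variable {F : Type} [Field F] {lam : F} {l : Submodule F (Fin 4 → F)} {u w : Fin 4 → F}

lemma notMem_planePi_of_inf_eq_span (hlu : l ⊓ planePi F = Submodule.span F {u})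
    (huQ : Fq F lam u ≠ 0) {v : Fin 4 → F} (hv0 : v ≠ 0) (hvl : v ∈ l) (hvQ : Fq F lam v = 0) :
    v ∉ planePi F := by
  intro hv
  obtain ⟨a, rfl⟩ := Submodule.mem_span_singleton.mp (hlu ▸ Submodule.mem_inf.mpr ⟨hvl, hv⟩)
  rw [Fq_smul] at hvQ
  have ha : a = 0 := pow_eq_zero_iff two_ne_zero |>.mp ((mul_eq_zero.mp hvQ).resolve_right huQ)
  exact hv0 (by rw [ha, zero_smul])

lemma injective_span_add_smul (hu0 : u ≠ 0) (hu : u ∈ planePi F) (hw : w ∉ planePi F) :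
    Function.Injective fun t : F ↦ Submodule.span F {w + t • u} := by
  intro t₁ t₂ h
  have hmem : w + t₁ • u ∈ Submodule.span F {w + t₂ • u} := by
    simp only at h
    rw [← h]
    exact Submodule.mem_span_singleton_self _
  obtain ⟨a, ha⟩ := Submodule.mem_span_singleton.mp hmem
  have ha1 : a = 1 := by
    have h3 := congrFun ha 3
    simp only [Pi.smul_apply, Pi.add_apply, smul_eq_mul, mem_planePi.mp hu, mul_zero,
      add_zero] at h3
    exact (mul_eq_right₀ (mt mem_planePi.mpr hw)).mp h3
  rw [ha1, one_smul, add_right_inj] at ha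
  exact (smul_left_injective F hu0 ha).symm

lemma qpts_eq_image (hlu : l ⊓ planePi F = Submodule.span F {u}) (hwl : w ∈ l)
    (hw : w ∉ planePi F) (huQ : Fq F lam u ≠ 0) :
    qpts F lam l =
      (fun t ↦ Submodule.span F {w + t • u}) '' {t : F | Fq F lam (w + t • u) = 0} := by
  have hu : u ∈ l ⊓ planePi F := hlu ▸ Submodule.mem_span_singleton_self u
  ext P
  constructor
  · intro hP
    obtain ⟨v, hv0, hvl, hvQ, rfl⟩ := exists_mem_of_mem_qpts hP
    have hv3 : v 3 ≠ 0 := notMem_planePi_of_inf_eq_span hlu huQ hv0 hvl hvQ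
    have hw3 : w 3 ≠ 0 := hw
    set b := v 3 / w 3
    have hb : b ≠ 0 := div_ne_zero hv3 hw3
    have hvw : v - b • w ∈ l ⊓ planePi F := by
      refine ⟨l.sub_mem hvl (l.smul_mem b hwl), ?_⟩
      change v 3 - b * w 3 = 0
      rw [div_mul_cancel₀ _ hw3, sub_self]
    obtain ⟨a, ha⟩ := Submodule.mem_span_singleton.mp (hlu ▸ hvw)
    have hvb : w + (a / b) • u = b⁻¹ • v := by
      rw [eq_add_of_sub_eq' ha.symm, smul_add, smul_smul, smul_smul, inv_mul_cancel₀ hb,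
        one_smul, div_eq_inv_mul]
    refine ⟨a / b, ?_, ?_⟩
    · rw [Set.mem_ofPred_eq, hvb, Fq_smul, hvQ, mul_zero]
    · change Submodule.span F {w + (a / b) • u} = _
      rw [hvb, Submodule.span_singleton_smul_eq (IsUnit.mk0 _ (inv_ne_zero hb))]
  · rintro ⟨t, htQ, rfl⟩
    have hv0 : w + t • u ≠ 0 := by
      intro h
      apply hw
      simpa [mem_planePi, mem_planePi.mp hu.2] using congrFun h 3
    exact span_singleton_mem_qpts hv0 (l.add_mem hwl (l.smul_mem t hu.1)) htQ

lemma ncard_qpts_eq (hlu : l ⊓ planePi F = Submodule.span F {u}) (hwl : w ∈ l)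
    (hw : w ∉ planePi F) (huQ : Fq F lam u ≠ 0) :
    (qpts F lam l).ncard = {t : F | Fq F lam (w + t • u) = 0}.ncard := by
  have hu : u ∈ planePi F := (hlu ▸ Submodule.mem_span_singleton_self u : u ∈ l ⊓ _).2
  have hu0 : u ≠ 0 := fun h ↦ huQ (by simp [h, Fq])
  rw [qpts_eq_image hlu hwl hw huQ,
    Set.ncard_image_of_injective _ (injective_span_add_smul hu0 hu hw)]

end LineThroughPlanePoint

section ExternalPoints

variable {F : Type} [Field F]

lemma isSquare_neg_Fq_of_polarFq_eq_zero {c u : Fin 4 → F} (hc0 : c ≠ 0) (hc : c ∈ planePi F)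
    (hu : u ∈ planePi F) (hcQ : Fq F 0 c = 0) (hpol : polarFq F 0 c u = 0) :
    IsSquare (-Fq F 0 u) := by
  have hc3 : c 3 = 0 := hc
  have hu3 : u 3 = 0 := hu
  simp only [Fq, hc3, hu3] at hcQ ⊢
  rw [polarFq_eq] at hpol
  -- for `⟨c⟩ ∈ C` conjugate to `u`: `(c 0)² F₀(u) = -(c 0 * u 1 - c 1 * u 0)²`,
  -- and symmetrically with `c 2`
  by_cases hc0' : c 0 = 0
  · have hc1 : c 1 = 0 := by simpa [hc0'] using hcQ
    have hc2 : c 2 ≠ 0 := fun hc2 ↦ hc0 (by ext i; fin_cases i <;> simp [*])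
    refine ⟨(c 2 * u 1 - c 1 * u 2) / c 2, ?_⟩
    field_simp
    linear_combination -(u 2 * c 2) * hpol + u 2 ^ 2 * hcQ
  · refine ⟨(c 0 * u 1 - c 1 * u 0) / c 0, ?_⟩
    field_simp
    linear_combination -(u 0 * c 0) * hpol + u 0 ^ 2 * hcQ

lemma conic_points_eq_qpts {m : Submodule F (Fin 4 → F)} (hm : m ≤ planePi F) :
    {P | P ∈ conicC F ∧ P ≤ m} = qpts F 0 m := by
  ext P
  exact ⟨fun ⟨⟨hP, _⟩, hPm⟩ ↦ ⟨hP, hPm⟩, fun ⟨hP, hPm⟩ ↦ ⟨⟨hP, hPm.trans hm⟩, hPm⟩⟩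

lemma Fq_ne_zero_of_mem_setE {u : Fin 4 → F} (hu0 : u ≠ 0)
    (hE : Submodule.span F {u} ∈ setE F) : Fq F 0 u ≠ 0 :=
  fun huQ ↦ hE.2.2.1 ⟨(span_singleton_mem_quadric_iff hu0).mpr huQ, hE.2.1⟩

lemma isSquare_neg_Fq_of_mem_setE {u : Fin 4 → F} (hu0 : u ≠ 0)
    (hE : Submodule.span F {u} ∈ setE F) : IsSquare (-Fq F 0 u) := by
  have huQ := Fq_ne_zero_of_mem_setE hu0 hE
  obtain ⟨-, hπ, -, htwo⟩ := hE
  obtain ⟨m, ⟨-, hmπ, htan⟩, hum⟩ := Set.nonempty_of_ncard_ne_zero (htwo ▸ two_ne_zero)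
  rw [conic_points_eq_qpts hmπ] at htan
  obtain ⟨c, hc0, hcm, hcQ⟩ := exists_mem_of_tangentTo htan
  have hu : u ∈ Submodule.span F {u} := Submodule.mem_span_singleton_self u
  exact isSquare_neg_Fq_of_polarFq_eq_zero hc0 (hmπ hcm) (hπ hu) hcQ
    (polarFq_eq_zero_of_tangentTo htan hcm hc0 hcQ (hum hu) huQ)

end ExternalPoints

lemma ncard_qpts_eq_ncard_sqrts {F : Type} [Field F] {l : Submodule F (Fin 4 → F)}
    {u w : Fin 4 → F} (hlu : l ⊓ planePi F = Submodule.span F {u}) (hwl : w ∈ l)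
    (hw : w ∉ planePi F) (hwQ : Fq F 0 w = 0) (hpol : polarFq F 0 w u = 0)
    (huQ : Fq F 0 u ≠ 0) (hsq : IsSquare (-Fq F 0 u)) (lam : F) :
    (qpts F lam l).ncard = {x : F | x ^ 2 = lam}.ncard := by
  obtain ⟨s, hs⟩ := hsq
  have hs0 : s ≠ 0 := by rintro rfl; exact huQ (by simpa using hs)
  have hw3 : w 3 ≠ 0 := hw
  have hu : u ∈ planePi F := (hlu ▸ Submodule.mem_span_singleton_self u : u ∈ l ⊓ _).2
  set u' := (w 3 / s) • u
  have hu' : u' ∈ planePi F := Submodule.smul_mem _ _ hu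
  have hlu' : l ⊓ planePi F = Submodule.span F {u'} := by
    rw [hlu, Submodule.span_singleton_smul_eq (IsUnit.mk0 _ (div_ne_zero hw3 hs0))]
  have hu'Q : Fq F lam u' = -w 3 ^ 2 := by
    rw [Fq_of_mem_planePi lam hu', Fq_smul, ← neg_neg (Fq F 0 u), hs]
    field_simp
  have heval (x : F) : Fq F lam (w + x • u') = w 3 ^ 2 * (lam - x ^ 2) := by
    rw [Fq_add_smul, polarFq_of_mem_planePi lam w hu', polarFq_smul_right, hpol,
      Fq_eq_Fq_zero_add lam w, hwQ, hu'Q]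
    ring
  rw [ncard_qpts_eq hlu' hwl hw (by rw [hu'Q]; exact neg_ne_zero.mpr (pow_ne_zero 2 hw3))]
  congr 1
  ext x
  rw [Set.mem_ofPred_eq, Set.mem_ofPred_eq, heval, mul_eq_zero_iff_left (pow_ne_zero 2 hw3),
    sub_eq_zero, eq_comm]

lemma ringChar_ne_two_of_odd_card {F : Type} [Field F] [Fintype F]
    (h : Odd (Fintype.card F)) : ringChar F ≠ 2 :=
  fun h2 ↦ Nat.not_even_iff_odd.mpr h
    (Nat.even_iff.mpr (FiniteField.even_card_iff_char_two.mp h2))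

lemma ncard_setOf_sq_eq {F : Type} [Field F] [Fintype F] [DecidableEq F]
    (hF : ringChar F ≠ 2) (a : F) :
    ({x : F | x ^ 2 = a}.ncard : ℤ) = quadraticChar F a + 1 := by
  rw [Set.ncard_eq_toFinset_card']
  exact quadraticChar_card_sqrts hF a

theorem statement_9 {F : Type} [Field F] [Fintype F] (q : ℕ)
    (hq : Fintype.card F = q) (hodd : Odd q) :
    ∀ l ∈ lineL4 F,
      (∀ lam : F, lam ≠ 0 → IsSquare lam → secantTo F l lam) ∧
      (∀ lam : F, ¬ IsSquare lam → externalTo F l lam) := by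
  classical
  rintro l ⟨-, -, htan, hE⟩
  have hF := ringChar_ne_two_of_odd_card (hq ▸ hodd)
  obtain ⟨u, hu0, hlu⟩ := exists_eq_span_singleton_of_isPoint hE.1
  rw [hlu] at hE
  have huQ := Fq_ne_zero_of_mem_setE hu0 hE
  have hul : u ∈ l := (hlu ▸ Submodule.mem_span_singleton_self u : u ∈ l ⊓ planePi F).1
  obtain ⟨w, hw0, hwl, hwQ⟩ := exists_mem_of_tangentTo htan
  have hcount (lam : F) : ((qpts F lam l).ncard : ℤ) = quadraticChar F lam + 1 := by
    rw [ncard_qpts_eq_ncard_sqrts hlu hwl (notMem_planePi_of_inf_eq_span hlu huQ hw0 hwl hwQ) hwQ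
      (polarFq_eq_zero_of_tangentTo htan hwl hw0 hwQ hul huQ) huQ
      (isSquare_neg_Fq_of_mem_setE hu0 hE)]
    exact ncard_setOf_sq_eq hF lam
  refine ⟨fun lam hlam hsq ↦ ?_, fun lam hsq ↦ ?_⟩
  · have h := hcount lam
    rw [(quadraticChar_one_iff_isSquare hlam).mpr hsq] at h
    unfold secantTo
    omega
  · have h := hcount lam
    rw [quadraticChar_neg_one_iff_not_isSquare.mpr hsq] at h
    unfold externalTo
    omega
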